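/- arXiv:2304.05313 — 5 statements merged into one kernel-verified Lean document; each statement's English description precedes it below -/
import Mathlib

section
/- Let α > 0, W > 0, let w : [0,∞) → ℝ be continuous with 0 < w(t) ≤ W for all t, and let x : [0,∞) → ℝ be differentiable with |x(t)| < w(t) and ẋ(t) = −(α/(w(t) − |x(t)|))·x(t) for all t ≥ 0. Then |x(t)| ≤ |x(0)|·e^{−(α/W)t} for all t ≥ 0; in particular x(t) → 0 as t → ∞. -/
/-- For the scalar density system ẋ = −(α/(w(t) − |x|))·x with α > 0 and
0 < w(t) ≤ W, trajectories with |x(t)| < w(t) decay exponentially: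
|x(t)| ≤ |x(0)|·e^{−(α/W)t}, and in particular x(t) → 0 as t → ∞. -/
theorem scalar_density_funnel_exponential_stability
    (α W : ℝ) (hα : 0 < α) (hW : 0 < W) (w x : ℝ → ℝ)
    (hw_cont : ContinuousOn w (Set.Ici 0))
    (hw : ∀ t ≥ (0:ℝ), 0 < w t ∧ w t ≤ W)
    (hx_mem : ∀ t ≥ (0:ℝ), |x t| < w t)
    (hx : ∀ t ≥ (0:ℝ), HasDerivAt x (-(α / (w t - |x t|)) * x t) t) :
    (∀ t ≥ (0:ℝ), |x t| ≤ |x 0| * Real.exp (-(α / W) * t)) ∧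
    Filter.Tendsto x Filter.atTop (nhds 0) := by
  set c : ℝ := α / W with hc
  have hcpos : 0 < c := div_pos hα hW
  set f : ℝ → ℝ := fun t => (x t) ^ 2 * Real.exp (2 * c * t) with hf
  -- derivative of f at points t ≥ 0
  have hfderiv : ∀ t ≥ (0:ℝ), HasDerivAt f
      ((2 * x t * (-(α / (w t - |x t|)) * x t)) * Real.exp (2 * c * t)
        + (x t) ^ 2 * (Real.exp (2 * c * t) * (2 * c))) t := by
    intro t ht
    have h1 : HasDerivAt (fun t => (x t) ^ 2) (2 * x t * (-(α / (w t - |x t|)) * x t)) t := by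
      have := (hx t ht).fun_pow 2
      simpa [mul_comm, mul_assoc, mul_left_comm] using this
    have h2 : HasDerivAt (fun t => Real.exp (2 * c * t)) (Real.exp (2 * c * t) * (2 * c)) t := by
      have hlin : HasDerivAt (fun t : ℝ => 2 * c * t) (2 * c) t := by
        simpa using (hasDerivAt_id t).const_mul (2 * c)
      simpa using hlin.exp
    exact h1.mul h2
  -- f is antitone on Ici 0
  have hmono : AntitoneOn f (Set.Ici 0) := by
    apply AntitoneOn.mono (s := Set.Ici (0:ℝ)) ?_ le_rfl
    apply antitoneOn_of_deriv_nonpos (convex_Ici 0)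
    · intro t ht
      exact ((hfderiv t ht).continuousAt).continuousWithinAt
    · intro t ht
      rw [interior_Ici] at ht
      exact (hfderiv t (le_of_lt ht)).differentiableAt.differentiableWithinAt
    · intro t ht
      rw [interior_Ici] at ht
      have ht' : (0:ℝ) ≤ t := le_of_lt ht
      rw [(hfderiv t ht').deriv]
      have hwt := hw t ht'
      have hxm := hx_mem t ht'
      have hden : 0 < w t - |x t| := sub_pos.mpr hxm
      have hrho : c ≤ α / (w t - |x t|) := by
        rw [hc]
        apply div_le_div_of_nonneg_left (le_of_lt hα) hden
        have : w t - |x t| ≤ w t := by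
          have := abs_nonneg (x t); linarith
        linarith [hwt.2]
      have hexp : 0 < Real.exp (2 * c * t) := Real.exp_pos _
      have hx2 : 0 ≤ (x t) ^ 2 := sq_nonneg _
      have : (2 * x t * (-(α / (w t - |x t|)) * x t)) * Real.exp (2 * c * t)
          + (x t) ^ 2 * (Real.exp (2 * c * t) * (2 * c))
          = 2 * (x t) ^ 2 * Real.exp (2 * c * t) * (c - α / (w t - |x t|)) := by
        ring
      rw [this]
      have : c - α / (w t - |x t|) ≤ 0 := by linarith
      have h2 : 0 ≤ 2 * (x t) ^ 2 * Real.exp (2 * c * t) := by positivity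
      exact mul_nonpos_of_nonneg_of_nonpos h2 this
  -- the exponential bound
  have hbound : ∀ t ≥ (0:ℝ), |x t| ≤ |x 0| * Real.exp (-(α / W) * t) := by
    intro t ht
    have hft : f t ≤ f 0 := hmono (Set.self_mem_Ici) ht ht
    have hf0 : f 0 = (x 0) ^ 2 := by simp [hf]
    have key : (x t) ^ 2 ≤ (x 0) ^ 2 * Real.exp (-(2 * c * t)) := by
      have hexp : 0 < Real.exp (2 * c * t) := Real.exp_pos _
      rw [hf0] at hft
      rw [Real.exp_neg, ← div_eq_mul_inv, le_div_iff₀ hexp]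
      simpa [hf] using hft
    have hsq : (x t) ^ 2 ≤ (|x 0| * Real.exp (-(α / W) * t)) ^ 2 := by
      have : (|x 0| * Real.exp (-(α / W) * t)) ^ 2 = (x 0) ^ 2 * Real.exp (-(2 * c * t)) := by
        rw [mul_pow, sq_abs, sq (Real.exp _), ← Real.exp_add]
        congr 1
        rw [hc]; ring
      rw [this]; exact key
    have := Real.sqrt_le_sqrt hsq
    rwa [Real.sqrt_sq_eq_abs, Real.sqrt_sq (by positivity)] at this
  refine ⟨hbound, ?_⟩
  -- convergence to 0
  have hg : Filter.Tendsto (fun t => |x 0| * Real.exp (-(α / W) * t)) Filter.atTop (nhds 0) := by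
    have h1 : Filter.Tendsto (fun t : ℝ => -(α / W) * t) Filter.atTop Filter.atBot := by
      apply Filter.Tendsto.const_mul_atTop_of_neg (by linarith : -(α / W) < 0) Filter.tendsto_id
    have h2 : Filter.Tendsto (fun t => Real.exp (-(α / W) * t)) Filter.atTop (nhds 0) :=
      Real.tendsto_exp_atBot.comp h1
    simpa using h2.const_mul (|x 0|)
  apply squeeze_zero_norm' ?_ hg
  filter_upwards [Filter.eventually_ge_atTop (0:ℝ)] with t ht
  simpa using hbound t ht
end

section
/- Let (x₁, x₂) : [0,T] → ℝ² be differentiable with x₁(t)² + x₂(t)² > 1 for all t and satisfying ẋ₁(t) = x₂(t) − ρ(x(t))·x₁(t), ẋ₂(t) = −x₁(t) − ρ(x(t))·x₂(t) with ρ(x) = −ln(x₁² + x₂² − 1). If x₁(0)² + x₂(0)² ≥ 2, then x₁(t)² + x₂(t)² ≥ 2 for all t ∈ [0,T]; i.e., the region {x ∈ ℝ² : x₁² + x₂² ≥ 2} is positively invariant. -/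
open Topology Filter


/-- For the planar density system ẋ₁ = x₂ − ρ(x)x₁, ẋ₂ = −x₁ − ρ(x)x₂ with
ρ(x) = −ln(x₁² + x₂² − 1), the region {x : x₁² + x₂² ≥ 2} is positively
invariant: if x₁(0)² + x₂(0)² ≥ 2 then x₁(t)² + x₂(t)² ≥ 2 for all t ∈ [0,T]. -/
theorem planar_density_neg_log_invariance
    (T : ℝ) (hT : 0 ≤ T) (x₁ x₂ : ℝ → ℝ)
    (hmem : ∀ t ∈ Set.Icc (0:ℝ) T, 1 < (x₁ t)^2 + (x₂ t)^2)
    (h₁ : ∀ t ∈ Set.Icc (0:ℝ) T, HasDerivAt x₁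
      (x₂ t - (-Real.log ((x₁ t)^2 + (x₂ t)^2 - 1)) * x₁ t) t)
    (h₂ : ∀ t ∈ Set.Icc (0:ℝ) T, HasDerivAt x₂
      (-(x₁ t) - (-Real.log ((x₁ t)^2 + (x₂ t)^2 - 1)) * x₂ t) t)
    (h0 : 2 ≤ (x₁ 0)^2 + (x₂ 0)^2) :
    ∀ t ∈ Set.Icc (0:ℝ) T, 2 ≤ (x₁ t)^2 + (x₂ t)^2 := by
  set f : ℝ → ℝ := fun t => (x₁ t)^2 + (x₂ t)^2 with hf_def
  have hf' : ∀ t ∈ Set.Icc (0:ℝ) T,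
      HasDerivAt f (2 * Real.log (f t - 1) * f t) t := by
    intro t ht
    have := ((h₁ t ht).pow 2).add ((h₂ t ht).pow 2)
    refine HasDerivAt.congr_deriv (f := f) this ?_
    simp only [hf_def]
    ring
  have hfc : ContinuousOn f (Set.Icc (0:ℝ) T) := fun t ht =>
    (hf' t ht).continuousAt.continuousWithinAt
  have h0' : 2 ≤ f 0 := by simpa [hf_def] using h0
  clear_value f
  by_contra hcon
  push_neg at hcon
  obtain ⟨t₀, ht₀, ht₀lt'⟩ := hcon
  have ht₀lt : f t₀ < 2 := by simpa [hf_def] using ht₀lt'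
  -- the set of times up to t₀ where f ≥ 2
  set S : Set ℝ := Set.Icc (0:ℝ) t₀ ∩ f ⁻¹' (Set.Ici 2) with hS_def
  have hsub : Set.Icc (0:ℝ) t₀ ⊆ Set.Icc (0:ℝ) T :=
    Set.Icc_subset_Icc le_rfl ht₀.2
  have hS0 : (0:ℝ) ∈ S := ⟨⟨le_rfl, ht₀.1⟩, h0'⟩
  have hSclosed : IsClosed S :=
    (hfc.mono hsub).preimage_isClosed_of_isClosed isClosed_Icc isClosed_Ici
  have hSbdd : BddAbove S := ⟨t₀, fun t ht => ht.1.2⟩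
  set c : ℝ := sSup S with hc_def
  have hcS : c ∈ S := hSclosed.csSup_mem ⟨0, hS0⟩ hSbdd
  have hcT : c ∈ Set.Icc (0:ℝ) T := hsub hcS.1
  have hfc2 : 2 ≤ f c := hcS.2
  have hclt : c < t₀ := by
    rcases lt_or_eq_of_le hcS.1.2 with h | h
    · exact h
    · exact absurd (h ▸ hfc2) (not_le.mpr ht₀lt)
  have hlt : ∀ t, c < t → t ≤ t₀ → f t < 2 := by
    intro t hct htt₀
    by_contra h
    push_neg at h
    have : t ∈ S := ⟨⟨le_trans hcS.1.1 (le_of_lt hct), htt₀⟩, h⟩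
    exact absurd (le_csSup hSbdd this) (not_le.mpr hct)
  -- f c ≤ 2, by continuity from the right
  have hfc2' : f c ≤ 2 := by
    have hcw : ContinuousWithinAt f (Set.Ioc c t₀) c :=
      (hfc c hcT).mono (fun t ht => hsub ⟨le_trans hcS.1.1 (le_of_lt ht.1), ht.2⟩)
    have hne : (𝓝[Set.Ioc c t₀] c).NeBot := by
      rw [nhdsWithin_Ioc_eq_nhdsGT hclt]
      infer_instance
    refine le_of_tendsto hcw ?_
    filter_upwards [self_mem_nhdsWithin] with t ht
    exact le_of_lt (hlt t ht.1 ht.2)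
  have hfceq : f c = 2 := le_antisymm hfc2' hfc2
  -- choose a small interval to the right of c where f ≥ 3/2
  have hcw : ContinuousWithinAt f (Set.Icc 0 T) c := hfc c hcT
  rw [Metric.continuousWithinAt_iff] at hcw
  obtain ⟨δ₁, hδ₁pos, hδ₁⟩ := hcw (1/2) (by norm_num)
  set b : ℝ := min (c + δ₁ / 2) t₀ with hb_def
  have hcb : c < b := lt_min (by linarith) hclt
  have hbt₀ : b ≤ t₀ := min_le_right _ _
  have hIccsub : Set.Icc c b ⊆ Set.Icc 0 T := fun t ht =>
    ⟨le_trans hcS.1.1 ht.1, le_trans ht.2 (le_trans hbt₀ ht₀.2)⟩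
  have hlow : ∀ t ∈ Set.Icc c b, 3/2 < f t := by
    intro t ht
    have hd : dist t c < δ₁ := by
      rw [Real.dist_eq, abs_of_nonneg (by linarith [ht.1])]
      have := le_trans ht.2 (min_le_left _ _)
      linarith
    have := hδ₁ (hIccsub ht) hd
    rw [Real.dist_eq, hfceq] at this
    have := abs_lt.mp this
    linarith [this.1]
  have hhigh : ∀ t ∈ Set.Icc c b, f t ≤ 2 := by
    intro t ht
    rcases lt_or_eq_of_le ht.1 with h | h
    · exact le_of_lt (hlt t h (le_trans ht.2 hbt₀))
    · rw [← h, hfceq]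
  -- Grönwall on [c, b] for g = 2 - f
  set g : ℝ → ℝ := fun t => 2 - f t with hg_def
  have key : ∀ t ∈ Set.Icc c b, ‖g t‖ ≤ gronwallBound 0 8 0 (t - c) := by
    apply norm_le_gronwallBound_of_norm_deriv_right_le
      (f' := fun t => -(2 * Real.log (f t - 1) * f t))
    · exact (continuousOn_const.sub (hfc.mono hIccsub))
    · intro x hx
      exact (((hf' x (hIccsub (Set.Ico_subset_Icc_self hx))).const_sub
        2).hasDerivWithinAt)
    · simp [hg_def, hfceq]
    · intro x hx
      have hx' : x ∈ Set.Icc c b := Set.Ico_subset_Icc_self hx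
      have h32 : 3/2 < f x := hlow x hx'
      have h2 : f x ≤ 2 := hhigh x hx'
      -- -log (f x - 1) ≤ 2 * (2 - f x)
      have hy : (0:ℝ) < f x - 1 := by linarith
      have hlog : -Real.log (f x - 1) ≤ 2 * (2 - f x) := by
        have h1 : Real.log (f x - 1)⁻¹ ≤ (f x - 1)⁻¹ - 1 :=
          Real.log_le_sub_one_of_pos (inv_pos.mpr hy)
        rw [Real.log_inv] at h1
        have h3 : (f x - 1)⁻¹ ≤ 2 := by
          rw [inv_le_comm₀ hy (by norm_num)]
          linarith
        have hp : (0:ℝ) ≤ (2 - f x) * (2 - (f x - 1)⁻¹) :=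
          mul_nonneg (by linarith) (by linarith)
        have hc : (f x - 1) * (f x - 1)⁻¹ = 1 := mul_inv_cancel₀ (ne_of_gt hy)
        nlinarith [hp, hc, h1]
      have hlognp : Real.log (f x - 1) ≤ 0 :=
        Real.log_nonpos (by linarith) (by linarith)
      have hgx : g x = 2 - f x := rfl
      rw [Real.norm_eq_abs, Real.norm_eq_abs, hgx,
        abs_of_nonneg (by linarith : (0:ℝ) ≤ 2 - f x)]
      have hfpos : (0:ℝ) ≤ f x := by linarith
      have : |-(2 * Real.log (f x - 1) * f x)| = 2 * (-Real.log (f x - 1)) * f x := by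
        rw [abs_of_nonneg]
        · ring
        · nlinarith
      rw [this]
      nlinarith
  have hb2 : f b < 2 := hlt b hcb hbt₀
  have := key b ⟨le_of_lt hcb, le_rfl⟩
  rw [gronwallBound_ε0_δ0, Real.norm_eq_abs,
    abs_of_nonneg (by linarith : (0:ℝ) ≤ 2 - f b)] at this
  linarith
end

section
/- Let n ∈ ℕ, k > 0, γ > 0, c₀ ∈ ℝⁿ, w : ℝ → ℝⁿ, ρ : ℝ × ℝ → ℝ, and let y : [0,∞) → ℝ and c : [0,∞) → ℝⁿ be differentiable with ẏ(t) = ρ(y(t),t) + k·⟨c(t) − c₀, w(t)⟩ and ċ(t) = −γ·y(t)·w(t) for all t ≥ 0. If ρ(y(t),t)·y(t) ≤ 0 for all t ≥ 0, then for all t ≥ 0: y(t)² + (k/γ)·‖c(t) − c₀‖² ≤ y(0)² + (k/γ)·‖c(0) − c₀‖²; in particular y and c are bounded on [0,∞). -/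
/-- For the adaptive closed-loop system ẏ = ρ(y,t) + k⟨c − c₀, w⟩ with
adaptation law ċ = −γ·y·w, if the density function is stable
(ρ(y(t),t)·y(t) ≤ 0), then y(t)² + (k/γ)‖c(t) − c₀‖² is bounded by its
initial value, and in particular y and c are bounded on [0,∞). -/
theorem adaptive_lyapunov_boundedness
    (n : ℕ) (k γ : ℝ) (hk : 0 < k) (hγ : 0 < γ)
    (c₀ : EuclideanSpace ℝ (Fin n)) (w : ℝ → EuclideanSpace ℝ (Fin n))
    (ρ : ℝ → ℝ → ℝ) (y : ℝ → ℝ) (c : ℝ → EuclideanSpace ℝ (Fin n))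
    (hy : ∀ t ≥ (0:ℝ), HasDerivAt y (ρ (y t) t + k * (inner ℝ (c t - c₀) (w t) : ℝ)) t)
    (hc : ∀ t ≥ (0:ℝ), HasDerivAt c ((-γ * y t) • w t) t)
    (hρ : ∀ t ≥ (0:ℝ), ρ (y t) t * y t ≤ 0) :
    (∀ t ≥ (0:ℝ), (y t)^2 + (k / γ) * ‖c t - c₀‖^2 ≤
      (y 0)^2 + (k / γ) * ‖c 0 - c₀‖^2) ∧
    (∃ M : ℝ, ∀ t ≥ (0:ℝ), |y t| ≤ M) ∧
    (∃ M : ℝ, ∀ t ≥ (0:ℝ), ‖c t‖ ≤ M) := by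
  set V : ℝ → ℝ := fun t => (y t)^2 + (k / γ) * ‖c t - c₀‖^2 with hVdef
  have hVd : ∀ t ≥ (0:ℝ), HasDerivAt V (2 * (ρ (y t) t * y t)) t := by
    intro t ht
    have h1 : HasDerivAt (fun s => (y s)^2)
        (2 * (y t) * (ρ (y t) t + k * (inner ℝ (c t - c₀) (w t) : ℝ))) t := by
      simpa using ((hy t ht).fun_pow 2)
    have hc' : HasDerivAt (fun s => c s - c₀) ((-γ * y t) • w t) t :=
      (hc t ht).sub_const c₀
    have h2 : HasDerivAt (fun s => (inner ℝ (c s - c₀) (c s - c₀) : ℝ))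
        ((inner ℝ (c t - c₀) ((-γ * y t) • w t) : ℝ)
          + (inner ℝ ((-γ * y t) • w t) (c t - c₀) : ℝ)) t :=
      hc'.inner ℝ hc'
    have h3 : HasDerivAt (fun s => ‖c s - c₀‖^2)
        (2 * ((-γ * y t) * (inner ℝ (c t - c₀) (w t) : ℝ))) t := by
      have := h2
      simp only [real_inner_smul_right, real_inner_smul_left,
        real_inner_self_eq_norm_sq] at this ⊢
      convert this using 1
      rw [real_inner_comm]
      ring
    have h4 := h1.add (h3.const_mul (k / γ))
    have : 2 * (y t) * (ρ (y t) t + k * (inner ℝ (c t - c₀) (w t) : ℝ))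
        + (k / γ) * (2 * ((-γ * y t) * (inner ℝ (c t - c₀) (w t) : ℝ)))
        = 2 * (ρ (y t) t * y t) := by
      field_simp
      ring
    rw [this] at h4
    exact h4
  have hcont : ContinuousOn V (Set.Ici 0) :=
    fun t ht => (hVd t ht).continuousAt.continuousWithinAt
  have hanti : AntitoneOn V (Set.Ici 0) := by
    apply antitoneOn_of_deriv_nonpos (convex_Ici 0) hcont
    · intro t ht
      rw [interior_Ici] at ht
      exact (hVd t ht.le).differentiableAt.differentiableWithinAt
    · intro t ht
      rw [interior_Ici] at ht
      rw [(hVd t ht.le).deriv]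
      nlinarith [hρ t ht.le]
  have hmain : ∀ t ≥ (0:ℝ), V t ≤ V 0 :=
    fun t ht => hanti (Set.self_mem_Ici) ht ht
  have hmain' : ∀ t ≥ (0:ℝ), (y t)^2 + (k / γ) * ‖c t - c₀‖^2 ≤
      (y 0)^2 + (k / γ) * ‖c 0 - c₀‖^2 := hmain
  set B : ℝ := (y 0)^2 + (k / γ) * ‖c 0 - c₀‖^2 with hB
  clear_value B
  refine ⟨hmain', ?_, ?_⟩
  · refine ⟨Real.sqrt B, fun t ht => ?_⟩
    have h1 : (y t)^2 ≤ B := by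
      have := hmain' t ht
      nlinarith [mul_nonneg (div_nonneg hk.le hγ.le) (sq_nonneg ‖c t - c₀‖)]
    calc |y t| = Real.sqrt ((y t)^2) := (Real.sqrt_sq_eq_abs _).symm
      _ ≤ Real.sqrt B := Real.sqrt_le_sqrt h1
  · refine ⟨Real.sqrt (γ / k * B) + ‖c₀‖, fun t ht => ?_⟩
    have hkγ : 0 < k / γ := div_pos hk hγ
    have h' : k / γ * ‖c t - c₀‖^2 ≤ B := by
      have := hmain' t ht
      nlinarith [sq_nonneg (y t)]
    have h1 : ‖c t - c₀‖^2 ≤ γ / k * B := by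
      have h2 : γ / k * (k / γ * ‖c t - c₀‖^2) ≤ γ / k * B :=
        mul_le_mul_of_nonneg_left h' (le_of_lt (div_pos hγ hk))
      have h3 : γ / k * (k / γ * ‖c t - c₀‖^2) = ‖c t - c₀‖^2 := by
        field_simp
      linarith
    have h2 : ‖c t - c₀‖ ≤ Real.sqrt (γ / k * B) := by
      calc ‖c t - c₀‖ = Real.sqrt (‖c t - c₀‖^2) := by
            rw [Real.sqrt_sq (norm_nonneg _)]
        _ ≤ Real.sqrt (γ / k * B) := Real.sqrt_le_sqrt h1
    calc ‖c t‖ = ‖(c t - c₀) + c₀‖ := by rw [sub_add_cancel]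
      _ ≤ ‖c t - c₀‖ + ‖c₀‖ := norm_add_le _ _
      _ ≤ Real.sqrt (γ / k * B) + ‖c₀‖ := by linarith
end

section
/- Let n ∈ ℕ, k > 0, γ > 0, α > 0, c₀ ∈ ℝⁿ, w : ℝ → ℝⁿ, and let y : [0,∞) → ℝ and c : [0,∞) → ℝⁿ be differentiable with ẏ(t) = −α·y(t) + k·⟨c(t) − c₀, w(t)⟩ and ċ(t) = −γ·y(t)·w(t) for all t ≥ 0. Then for every T ≥ 0: ∫₀ᵀ y(t)² dt ≤ (1/α)·(½y(0)² + (k/(2γ))·‖c(0) − c₀‖²). -/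
/-- For the adaptive closed-loop system with classical density function
ρ(y,t) = −αy: ẏ = −αy + k⟨c − c₀, w⟩, ċ = −γ·y·w, the output is
square-integrable: ∫₀ᵀ y² ≤ (1/α)(½y(0)² + (k/(2γ))‖c(0) − c₀‖²) for all T ≥ 0. -/
theorem adaptive_classical_output_square_integrable
    (n : ℕ) (k γ α : ℝ) (hk : 0 < k) (hγ : 0 < γ) (hα : 0 < α)
    (c₀ : EuclideanSpace ℝ (Fin n)) (w : ℝ → EuclideanSpace ℝ (Fin n))
    (y : ℝ → ℝ) (c : ℝ → EuclideanSpace ℝ (Fin n))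
    (hy : ∀ t ≥ (0:ℝ), HasDerivAt y (-α * y t + k * (inner ℝ (c t - c₀) (w t) : ℝ)) t)
    (hc : ∀ t ≥ (0:ℝ), HasDerivAt c ((-γ * y t) • w t) t) :
    ∀ T ≥ (0:ℝ), ∫ t in (0:ℝ)..T, (y t)^2 ≤
      (1 / α) * ((1/2) * (y 0)^2 + (k / (2 * γ)) * ‖c 0 - c₀‖^2) := by
  intro T hT
  set V : ℝ → ℝ := fun t => (1/2) * (y t)^2 +
      (k / (2 * γ)) * (inner ℝ (c t - c₀) (c t - c₀) : ℝ) with hV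
  have hVderiv : ∀ t ≥ (0:ℝ), HasDerivAt V (-α * (y t)^2) t := by
    intro t ht
    have h1 : HasDerivAt (fun s => (1/2) * (y s)^2)
        (y t * (-α * y t + k * (inner ℝ (c t - c₀) (w t) : ℝ))) t := by
      have := ((hy t ht).pow 2).const_mul (1/2 : ℝ)
      refine this.congr_deriv ?_
      ring
    have hcd : HasDerivAt (fun s => c s - c₀) ((-γ * y t) • w t) t :=
      (hc t ht).sub_const c₀
    have h2 : HasDerivAt (fun s => (inner ℝ (c s - c₀) (c s - c₀) : ℝ))
        ((inner ℝ (c t - c₀) ((-γ * y t) • w t) : ℝ) +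
         (inner ℝ ((-γ * y t) • w t) (c t - c₀) : ℝ)) t := hcd.inner ℝ hcd
    have h2' := h2.const_mul (k / (2 * γ))
    have := h1.add h2'
    refine this.congr_deriv ?_
    have hsymm : (inner ℝ ((-γ * y t) • w t) (c t - c₀) : ℝ)
        = (inner ℝ (c t - c₀) ((-γ * y t) • w t) : ℝ) := real_inner_comm _ _
    rw [hsymm, real_inner_smul_right]
    field_simp
    ring
  have hycont : ContinuousOn y (Set.uIcc 0 T) := by
    intro t ht
    rw [Set.uIcc_of_le hT] at ht
    exact ((hy t ht.1).continuousAt).continuousWithinAt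
  have hint : IntervalIntegrable (fun t => -α * (y t)^2) MeasureTheory.volume 0 T :=
    (continuousOn_const.mul ((hycont.pow 2))).intervalIntegrable
  have hFTC : ∫ t in (0:ℝ)..T, -α * (y t)^2 = V T - V 0 := by
    apply intervalIntegral.integral_eq_sub_of_hasDerivAt
    · intro t ht
      rw [Set.uIcc_of_le hT] at ht
      exact hVderiv t ht.1
    · exact hint
  have hconst : ∫ t in (0:ℝ)..T, -α * (y t)^2 = -α * ∫ t in (0:ℝ)..T, (y t)^2 :=
    intervalIntegral.integral_const_mul _ _
  have hVT : 0 ≤ V T := by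
    have h1 : (0:ℝ) ≤ (inner ℝ (c T - c₀) (c T - c₀) : ℝ) := real_inner_self_nonneg
    have h2 : (0:ℝ) ≤ k / (2 * γ) := by positivity
    have h3 : (0:ℝ) ≤ (1/2) * (y T)^2 := by positivity
    exact add_nonneg h3 (mul_nonneg h2 h1)
  have key : α * ∫ t in (0:ℝ)..T, (y t)^2 ≤ V 0 := by
    nlinarith [hFTC, hconst, hVT]
  have hV0 : V 0 = (1/2) * (y 0)^2 + (k / (2 * γ)) * ‖c 0 - c₀‖^2 := by
    simp only [hV]
    rw [real_inner_self_eq_norm_sq]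
  rw [← hV0]
  have h : (∫ t in (0:ℝ)..T, (y t)^2) ≤ V 0 / α :=
    (le_div_iff₀ hα).mpr (by linarith [key])
  calc (∫ t in (0:ℝ)..T, (y t)^2) ≤ V 0 / α := h
    _ = 1 / α * V 0 := by ring
end

section
/- Let α > 0, w > 0, and let x : [0,∞) → ℝ be differentiable with ẋ(t) = −α·(x(t) − w)·x(t) for all t ≥ 0 and x(0) > 0. Then x(t) → w as t → ∞. -/
open Filter Set Real

/-- Positivity of the trajectory. -/
lemma scalar_density_pos
    (α w : ℝ) (hα : 0 < α) (hw : 0 < w) (x : ℝ → ℝ)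
    (hx : ∀ t ≥ (0:ℝ), HasDerivAt x (-α * (x t - w) * x t) t)
    (h0 : 0 < x 0) : ∀ t ≥ (0:ℝ), 0 < x t := by
  have hcont : ContinuousOn x (Ici 0) := fun t ht =>
    ((hx t ht).continuousAt).continuousWithinAt
  by_contra h
  push_neg at h
  obtain ⟨t0, ht0, hxt0⟩ := h
  set S : Set ℝ := Ici (0:ℝ) ∩ x ⁻¹' (Iic 0) with hSdef
  have hSne : S.Nonempty := ⟨t0, ht0, hxt0⟩
  have hSclosed : IsClosed S :=
    hcont.preimage_isClosed_of_isClosed isClosed_Ici isClosed_Iic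
  have hSbdd : BddBelow S := ⟨0, fun s hs => hs.1⟩
  set t1 := sInf S with ht1def
  have ht1S : t1 ∈ S := hSclosed.csInf_mem hSne hSbdd
  have ht1nn : (0:ℝ) ≤ t1 := ht1S.1
  have hlt : ∀ t, 0 ≤ t → t < t1 → 0 < x t := by
    intro t h1 h2
    by_contra hc
    push_neg at hc
    exact absurd (csInf_le hSbdd ⟨h1, hc⟩) (not_le.mpr h2)
  have ht1pos : 0 < t1 := by
    rcases lt_or_eq_of_le ht1nn with h | h
    · exact h
    · exact absurd ht1S.2 (by simp [← h]; exact h0)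
  -- x t1 ≥ 0 by left limit
  have hxt1nn : 0 ≤ x t1 := by
    have hct : Tendsto x (nhdsWithin t1 (Iio t1)) (nhds (x t1)) :=
      ((hx t1 ht1nn).continuousAt).continuousWithinAt
    have hev : ∀ᶠ t in nhdsWithin t1 (Iio t1), 0 ≤ x t := by
      filter_upwards [Ioo_mem_nhdsLT_of_mem ⟨ht1pos, le_refl t1⟩] with t ht
      exact (hlt t ht.1.le ht.2).le
    exact ge_of_tendsto hct hev
  have hxt1 : x t1 = 0 := le_antisymm ht1S.2 hxt1nn
  have hxnn : ∀ t ∈ Icc (0:ℝ) t1, 0 ≤ x t := by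
    intro t ht
    rcases lt_or_eq_of_le ht.2 with h | h
    · exact (hlt t ht.1 h).le
    · rw [h, hxt1]
  -- bound M on x over the compact interval
  obtain ⟨tm, htm, hM⟩ := isCompact_Icc.exists_isMaxOn (nonempty_Icc.mpr ht1nn)
    (hcont.mono (Icc_subset_Ici_self))
  set M := x tm with hMdef
  -- the auxiliary function f is monotone on [0, t1]
  set f : ℝ → ℝ := fun t => x t * Real.exp (α * M * t) with hfdef
  have hfd : ∀ t ∈ Ici (0:ℝ), HasDerivAt f
      (-α * (x t - w) * x t * Real.exp (α * M * t)
        + x t * (Real.exp (α * M * t) * (α * M))) t := by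
    intro t ht
    have he : HasDerivAt (fun t : ℝ => Real.exp (α * M * t))
        (Real.exp (α * M * t) * (α * M)) t := by
      have : HasDerivAt (fun t : ℝ => α * M * t) (α * M) t := by
        simpa using (hasDerivAt_id t).const_mul (α * M)
      simpa using this.exp
    exact (hx t ht).mul he
  have hmono : MonotoneOn f (Icc 0 t1) := by
    apply monotoneOn_of_hasDerivWithinAt_nonneg (convex_Icc 0 t1)
    · exact (hcont.mono Icc_subset_Ici_self).mul
        (Real.continuous_exp.comp (continuous_const.mul continuous_id)).continuousOn
    · intro t ht
      rw [interior_Icc] at ht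
      exact ((hfd t (le_of_lt ht.1)).hasDerivWithinAt).mono interior_subset
    · intro t ht
      rw [interior_Icc] at ht
      have hx0 : 0 ≤ x t := hxnn t ⟨ht.1.le, ht.2.le⟩
      have hxM : x t ≤ M := hM ⟨ht.1.le, ht.2.le⟩
      have hep : 0 < Real.exp (α * M * t) := Real.exp_pos _
      nlinarith [mul_nonneg hx0 hep.le, mul_nonneg (mul_nonneg hα.le hx0) hep.le]
  have h1 : f 0 ≤ f t1 := hmono (left_mem_Icc.mpr ht1nn) (right_mem_Icc.mpr ht1nn) ht1nn
  have hf0 : f 0 = x 0 := by simp [hfdef]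
  have hft1 : f t1 = 0 := by simp [hfdef, hxt1]
  rw [hf0, hft1] at h1
  exact absurd h1 (not_le.mpr h0)

/-- For the scalar density system ẋ = −α(x − w)·x with α > 0 and constant
reference w > 0, any trajectory starting at x(0) > 0 converges to w. -/
theorem scalar_density_logistic_convergence
    (α w : ℝ) (hα : 0 < α) (hw : 0 < w) (x : ℝ → ℝ)
    (hx : ∀ t ≥ (0:ℝ), HasDerivAt x (-α * (x t - w) * x t) t)
    (h0 : 0 < x 0) :
    Filter.Tendsto x Filter.atTop (nhds w) := by
  have hpos := scalar_density_pos α w hα hw x hx h0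
  -- the function g t = exp(αwt) * (1/x t - 1/w) is constant on [0,∞)
  set g : ℝ → ℝ := fun t => Real.exp (α * w * t) * ((x t)⁻¹ - w⁻¹) with hgdef
  have hgd : ∀ t ≥ (0:ℝ), HasDerivAt g 0 t := by
    intro t ht
    have hxne : x t ≠ 0 := (hpos t ht).ne'
    have he : HasDerivAt (fun t : ℝ => Real.exp (α * w * t))
        (Real.exp (α * w * t) * (α * w)) t := by
      have : HasDerivAt (fun t : ℝ => α * w * t) (α * w) t := by
        simpa using (hasDerivAt_id t).const_mul (α * w)
      simpa using this.exp
    have hinv : HasDerivAt (fun t => (x t)⁻¹ - w⁻¹)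
        (-(-α * (x t - w) * x t) / (x t) ^ 2) t := ((hx t ht).inv hxne).sub_const _
    have := he.mul hinv
    have hval : Real.exp (α * w * t) * (α * w) * ((x t)⁻¹ - w⁻¹)
        + Real.exp (α * w * t) * (-(-α * (x t - w) * x t) / (x t) ^ 2) = 0 := by
      field_simp
      ring
    rw [hval] at this
    exact this
  have hgconst : ∀ t ≥ (0:ℝ), g t = g 0 := by
    intro t ht
    have hcont : ContinuousOn g (Icc 0 t) := fun s hs =>
      ((hgd s hs.1).continuousAt).continuousWithinAt
    exact constant_of_has_deriv_right_zero hcont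
      (fun s hs => (hgd s hs.1).hasDerivWithinAt)
      t (right_mem_Icc.mpr ht)
  set c : ℝ := (x 0)⁻¹ - w⁻¹ with hcdef
  have hg0 : g 0 = c := by simp [hgdef, hcdef]
  have hxinv : ∀ t ≥ (0:ℝ), (x t)⁻¹ = w⁻¹ + c * Real.exp (-(α * w * t)) := by
    intro t ht
    have := hgconst t ht
    rw [hg0] at this
    have hep : Real.exp (α * w * t) ≠ 0 := (Real.exp_pos _).ne'
    have h2 : (x t)⁻¹ - w⁻¹ = c / Real.exp (α * w * t) := by
      rw [eq_div_iff hep, mul_comm]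
      simpa [hgdef] using this
    rw [Real.exp_neg, ← div_eq_mul_inv]
    linarith [h2]
  -- limit of the inverse
  have hlim : Tendsto (fun t => (x t)⁻¹) atTop (nhds w⁻¹) := by
    have hexp : Tendsto (fun t : ℝ => Real.exp (-(α * w * t))) atTop (nhds 0) := by
      apply Real.tendsto_exp_atBot.comp
      apply tendsto_neg_atBot_iff.mpr
      exact Tendsto.const_mul_atTop (mul_pos hα hw) tendsto_id
    have : Tendsto (fun t => w⁻¹ + c * Real.exp (-(α * w * t))) atTop (nhds (w⁻¹ + c * 0)) :=
      tendsto_const_nhds.add (tendsto_const_nhds.mul hexp)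
    rw [mul_zero, add_zero] at this
    apply this.congr'
    filter_upwards [eventually_ge_atTop (0:ℝ)] with t ht
    exact (hxinv t ht).symm
  have : Tendsto (fun t => ((x t)⁻¹)⁻¹) atTop (nhds (w⁻¹)⁻¹) :=
    hlim.inv₀ (inv_ne_zero hw.ne')
  rw [inv_inv] at this
  exact this.congr (fun t => inv_inv (x t))
end
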